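/- Let d ≥ 1 and α, β ∈ (0, d). Let R be a random subset of ℤ^d and suppose there are constants 0 < c ≤ C such that for every finite set B ⊆ ℤ^d containing the origin and every x ∈ ℤ^d with |x| ≥ 2·diam(B), c·|x|^{−β}·Cap_α(B) ≤ P(R ∩ (x + B) ≠ ∅) ≤ C·|x|^{−β}·Cap_α(B). For n ≥ 1 let Ψ_n := ([−2^{n−1}, 2^{n−1}]^d \ [−2^{n−2}, 2^{n−2}]^d) ∩ ℤ^d. Then there exist constants 0 < c' ≤ C' depending only on d, α, β, c, C such that for every n ≥ 1 and every nonempty finite set B ⊆ Ψ_n, c'·2^{−nβ}·Cap_α(B) ≤ P(R ∩ B ≠ ∅) ≤ C'·2^{−nβ}·Cap_α(B). -/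

import Mathlib

open MeasureTheory ProbabilityTheory Set Pointwise
open scoped ENNReal Classical

noncomputable section

/-- The lattice `ℤ^d`. -/
abbrev Zd (d : ℕ) := Fin d → ℤ

/-- Euclidean distance on `ℤ^d`. -/
def zdist {d : ℕ} (x y : Zd d) : ℝ := Real.sqrt (∑ i, ((x i - y i : ℤ) : ℝ) ^ 2)

/-- Euclidean norm on `ℤ^d`. -/
def znorm {d : ℕ} (x : Zd d) : ℝ := Real.sqrt (∑ i, ((x i : ℤ) : ℝ) ^ 2)

/-- Euclidean diameter of a subset of `ℤ^d`. -/
def zdiam {d : ℕ} (A : Set (Zd d)) : ℝ := sSup {r : ℝ | ∃ x ∈ A, ∃ y ∈ A, r = zdist x y}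

/-- The set of energies `Σ_{x,y∈A} μ(x)μ(y)(|x-y| ∨ 1)^(-β)` of probability measures `μ`
supported on `A`. -/
def discEnergies {d : ℕ} (β : ℝ) (A : Set (Zd d)) : Set ℝ :=
  { E | ∃ μ : Zd d → ℝ, (∀ x, 0 ≤ μ x) ∧ (∀ x, x ∉ A → μ x = 0) ∧ HasSum μ 1 ∧
        E = ∑' x, ∑' y, μ x * μ y * (max (zdist x y) 1) ^ (-β) }

/-- Discrete Newtonian capacity with parameter `β` (it equals `0` for `A = ∅`,
since `sInf ∅ = 0` and `0⁻¹ = 0` in `ℝ`). -/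
def discCap {d : ℕ} (β : ℝ) (A : Set (Zd d)) : ℝ := (sInf (discEnergies β A))⁻¹

/-- The σ-algebra on subsets of `ℤ^d` generated by the events `{S | x ∈ S}`, `x ∈ ℤ^d`. -/
def setSigma (d : ℕ) : MeasurableSpace (Set (Zd d)) :=
  MeasurableSpace.generateFrom {C | ∃ x : Zd d, C = {S : Set (Zd d) | x ∈ S}}

/-- The annulus `Ψ_n = ([-2^(n-1), 2^(n-1)]^d \ [-2^(n-2), 2^(n-2)]^d) ∩ ℤ^d`
(with the real-valued bound `2^(n-2)` so that the case `n = 1` is handled correctly). -/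
def annulus (d n : ℕ) : Set (Zd d) :=
  {x | (∀ i, |(x i : ℝ)| ≤ (2:ℝ) ^ ((n : ℤ) - 1)) ∧ ¬ ∀ i, |(x i : ℝ)| ≤ (2:ℝ) ^ ((n : ℤ) - 2)}

/-!
Cut `B` along the grid of mesh `s ≈ 2^n / (8d)` into blocks. Since `B ⊆ Ψ_n` has coordinates
of size at most `2^(n-1)`, at most `K = (16d+1)^d` blocks are met; each has diameter at most
`√d (s-1) ≤ 2^(n-3)`, while every point of `Ψ_n` has norm between `2^(n-2)` and `√d 2^n`.
Translating a block by one of its own points therefore puts it within reach of the hypothesis,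
which gives `P(R hits the block) ≍ 2^(-nβ) Cap_α(block)`.

The upper bound then follows from a union bound over the blocks and monotonicity of `Cap_α`. For
the lower bound, some block `A` carries mass at least `1/K` of any probability measure `μ` on `B`;
normalising the restriction of `μ` to `A` multiplies the energy by at most `K²`, so
`Cap_α(B) ≤ K² Cap_α(A)` for a suitable block `A`.
-/

namespace HittingCapacity

variable {d : ℕ}

section Geometry

lemma znorm_eq_zdist_zero (x : Zd d) : znorm x = zdist x 0 := by
  simp [znorm, zdist]

lemma zdist_add_left (v x y : Zd d) : zdist (v + x) (v + y) = zdist x y := by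
  simp [zdist]

lemma zdist_le_sqrt_mul {x y : Zd d} {r : ℝ} (hr : 0 ≤ r)
    (h : ∀ i, |((x i - y i : ℤ) : ℝ)| ≤ r) : zdist x y ≤ √d * r := by
  have hsq : ∀ i, ((x i - y i : ℤ) : ℝ) ^ 2 ≤ r ^ 2 := fun i =>
    sq_le_sq.mpr ((h i).trans (le_abs_self r))
  calc zdist x y ≤ √(∑ _i : Fin d, r ^ 2) :=
        Real.sqrt_le_sqrt (Finset.sum_le_sum fun i _ => hsq i)
    _ = √d * r := by simp [Real.sqrt_mul, Real.sqrt_sq hr]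

lemma abs_le_znorm (x : Zd d) (i : Fin d) : |(x i : ℝ)| ≤ znorm x := by
  rw [← Real.sqrt_sq_eq_abs]
  exact Real.sqrt_le_sqrt
    (Finset.single_le_sum (f := fun j => ((x j : ℤ) : ℝ) ^ 2) (fun j _ => sq_nonneg _)
      (Finset.mem_univ i))

lemma zdist_le_zdiam {A : Set (Zd d)} (hA : A.Finite) {x y : Zd d} (hx : x ∈ A) (hy : y ∈ A) :
    zdist x y ≤ zdiam A := by
  refine le_csSup (((hA.prod hA).image fun p => zdist p.1 p.2).subset ?_).bddAbove
    ⟨x, hx, y, hy, rfl⟩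
  rintro r ⟨x, hx, y, hy, rfl⟩
  exact ⟨(x, y), ⟨hx, hy⟩, rfl⟩

lemma zdiam_vadd (v : Zd d) (A : Set (Zd d)) : zdiam (v +ᵥ A) = zdiam A := by
  unfold zdiam
  congr 1
  ext r
  constructor
  · rintro ⟨_, ⟨x, hx, rfl⟩, _, ⟨y, hy, rfl⟩, rfl⟩
    exact ⟨x, hx, y, hy, zdist_add_left v x y⟩
  · rintro ⟨x, hx, y, hy, rfl⟩
    exact ⟨v + x, ⟨x, hx, rfl⟩, v + y, ⟨y, hy, rfl⟩, (zdist_add_left v x y).symm⟩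

lemma two_pow_div_four_le_znorm {n : ℕ} {b : Zd d} (hb : b ∈ annulus d n) :
    2 ^ n / 4 ≤ znorm b := by
  obtain ⟨i, hi⟩ := not_forall.mp hb.2
  have h4 : (2 : ℝ) ^ ((n : ℤ) - 2) = 2 ^ n / 4 := by
    rw [zpow_sub₀ two_ne_zero, zpow_natCast]; norm_num
  exact h4 ▸ (not_le.mp hi).le.trans (abs_le_znorm b i)

lemma two_mul_abs_le_of_mem_annulus {n : ℕ} {b : Zd d} (hb : b ∈ annulus d n) (i : Fin d) :
    2 * |b i| ≤ 2 ^ n := by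
  have h2 : (2 : ℝ) ^ ((n : ℤ) - 1) = 2 ^ n / 2 := by
    rw [zpow_sub₀ two_ne_zero, zpow_natCast, zpow_one]
  have := hb.1 i
  rw [h2, ← Int.cast_abs] at this
  exact_mod_cast (by linarith : (2 : ℝ) * |b i| ≤ 2 ^ n)

lemma znorm_le_of_mem_annulus {n : ℕ} {b : Zd d} (hb : b ∈ annulus d n) :
    znorm b ≤ √d * 2 ^ n := by
  rw [znorm_eq_zdist_zero]
  refine zdist_le_sqrt_mul (by positivity) fun i => ?_
  have h : (2 : ℝ) * |(b i : ℝ)| ≤ 2 ^ n := by exact_mod_cast two_mul_abs_le_of_mem_annulus hb i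
  simp only [Pi.zero_apply, sub_zero]
  linarith [abs_nonneg (b i : ℝ)]

end Geometry

section Capacity

variable {α : ℝ} {A B : Set (Zd d)} {μ : Zd d → ℝ}

def energy (α : ℝ) (μ : Zd d → ℝ) : ℝ :=
  ∑' x, ∑' y, μ x * μ y * (max (zdist x y) 1) ^ (-α)

lemma energy_eq_sum {s : Finset (Zd d)} (hs : ∀ x ∉ s, μ x = 0) :
    energy α μ = ∑ x ∈ s, ∑ y ∈ s, μ x * μ y * (max (zdist x y) 1) ^ (-α) := by
  unfold energy
  rw [tsum_congr fun x => tsum_eq_sum fun y hy => by rw [hs y hy]; ring]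
  exact tsum_eq_sum fun x hx => Finset.sum_eq_zero fun y _ => by rw [hs x hx]; ring

lemma kernel_nonneg (α : ℝ) (x y : Zd d) : 0 ≤ (max (zdist x y) 1) ^ (-α) :=
  Real.rpow_nonneg (zero_le_one.trans (le_max_right _ _)) _

lemma energy_nonneg (h0 : ∀ x, 0 ≤ μ x) : 0 ≤ energy α μ :=
  tsum_nonneg fun x => tsum_nonneg fun y =>
    mul_nonneg (mul_nonneg (h0 x) (h0 y)) (kernel_nonneg α x y)

lemma energy_const_mul (a : ℝ) (μ : Zd d → ℝ) :
    energy α (fun x => a * μ x) = a ^ 2 * energy α μ := by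
  have h : ∀ x y, a * μ x * (a * μ y) * (max (zdist x y) 1) ^ (-α)
      = a ^ 2 * (μ x * μ y * (max (zdist x y) 1) ^ (-α)) := fun x y => by ring
  simp_rw [energy, h, tsum_mul_left]

lemma energy_indicator_le (hB : B.Finite) (h0 : ∀ x, 0 ≤ μ x) (hμB : ∀ x ∉ B, μ x = 0)
    (A : Set (Zd d)) : energy α (A.indicator μ) ≤ energy α μ := by
  have hs : ∀ x ∉ hB.toFinset, μ x = 0 := fun x hx => hμB x (by simpa using hx)
  have hind : ∀ x, A.indicator μ x ≤ μ x := fun x => by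
    by_cases hx : x ∈ A <;> simp [hx, h0 x]
  rw [energy_eq_sum hs, energy_eq_sum fun x hx => by simp [hs x hx]]
  exact Finset.sum_le_sum fun x _ => Finset.sum_le_sum fun y _ => mul_le_mul_of_nonneg_right
    (mul_le_mul (hind x) (hind y) (Set.indicator_nonneg (fun z _ => h0 z) y) (h0 x))
    (kernel_nonneg α x y)

lemma discEnergies_bddBelow : BddBelow (discEnergies α A) :=
  ⟨0, by rintro _ ⟨μ, h0, -, -, rfl⟩; exact energy_nonneg h0⟩

lemma sInf_discEnergies_nonneg : 0 ≤ sInf (discEnergies α A) :=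
  Real.sInf_nonneg <| by rintro _ ⟨μ, h0, -, -, rfl⟩; exact energy_nonneg h0

lemma discCap_nonneg : 0 ≤ discCap α A :=
  inv_nonneg.mpr sInf_discEnergies_nonneg

lemma one_mem_discEnergies {a : Zd d} (ha : a ∈ A) : (1 : ℝ) ∈ discEnergies α A := by
  refine ⟨Pi.single a 1, fun x => ?_, fun x hx => ?_, hasSum_pi_single a 1, ?_⟩
  · by_cases hx : x = a <;> simp [hx]
  · exact Pi.single_eq_of_ne (by rintro rfl; exact hx ha) _
  · show 1 = energy α _
    rw [energy_eq_sum (s := {a}) fun x hx => Pi.single_eq_of_ne (by simpa using hx) _]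
    simp [zdist]

lemma rpow_zdiam_le_of_mem_discEnergies (hA : A.Finite) (hα : 0 ≤ α) {E : ℝ}
    (hE : E ∈ discEnergies α A) : (max (zdiam A) 1) ^ (-α) ≤ E := by
  obtain ⟨μ, h0, hμA, hμ1, rfl⟩ := hE
  have hs : ∀ x ∉ hA.toFinset, μ x = 0 := fun x hx => hμA x (by simpa using hx)
  have hsum : ∑ x ∈ hA.toFinset, μ x = 1 := (hasSum_sum_of_ne_finset_zero hs).unique hμ1
  have hkernel : ∀ x ∈ hA.toFinset, ∀ y ∈ hA.toFinset,
      (max (zdiam A) 1) ^ (-α) ≤ (max (zdist x y) 1) ^ (-α) := fun x hx y hy =>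
    Real.rpow_le_rpow_of_nonpos (zero_lt_one.trans_le (le_max_right _ _))
      (max_le_max_right 1 (zdist_le_zdiam hA (by simpa using hx) (by simpa using hy)))
      (neg_nonpos.mpr hα)
  calc (max (zdiam A) 1) ^ (-α)
      = ∑ x ∈ hA.toFinset, ∑ y ∈ hA.toFinset, μ x * μ y * (max (zdiam A) 1) ^ (-α) := by
        simp only [← Finset.sum_mul, ← Finset.mul_sum, hsum, one_mul]
    _ ≤ energy α μ := by
        rw [energy_eq_sum hs]
        exact Finset.sum_le_sum fun x hx => Finset.sum_le_sum fun y hy =>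
          mul_le_mul_of_nonneg_left (hkernel x hx y hy) (mul_nonneg (h0 x) (h0 y))

lemma sInf_discEnergies_pos (hA : A.Finite) (hne : A.Nonempty) (hα : 0 ≤ α) :
    0 < sInf (discEnergies α A) :=
  (Real.rpow_pos_of_pos (zero_lt_one.trans_le (le_max_right _ _)) _).trans_le <|
    le_csInf ⟨1, one_mem_discEnergies hne.some_mem⟩
      fun _ hE => rpow_zdiam_le_of_mem_discEnergies hA hα hE

lemma discCap_mono (hB : B.Finite) (hne : A.Nonempty) (hα : 0 ≤ α) (hAB : A ⊆ B) :
    discCap α A ≤ discCap α B := by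
  refine inv_anti₀ (sInf_discEnergies_pos hB (hne.mono hAB) hα) <|
    csInf_le_csInf discEnergies_bddBelow ⟨1, one_mem_discEnergies hne.some_mem⟩ ?_
  rintro _ ⟨μ, h0, hμA, hμ1, rfl⟩
  exact ⟨μ, h0, fun x hx => hμA x (hx ∘ @hAB x), hμ1, rfl⟩

lemma discEnergies_subset_vadd (v : Zd d) (A : Set (Zd d)) :
    discEnergies α A ⊆ discEnergies α (v +ᵥ A) := by
  rintro _ ⟨μ, h0, hμA, hμ1, rfl⟩
  refine ⟨fun x => μ (-v + x), fun x => h0 _, fun x hx => hμA _ fun h => hx ⟨_, h, ?_⟩,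
    (Equiv.addLeft (-v)).hasSum_iff.mpr hμ1, ?_⟩
  · simp [vadd_eq_add]
  · show energy α μ = energy α _
    unfold energy
    conv_rhs => rw [← (Equiv.addLeft v).tsum_eq]
    refine tsum_congr fun x => ?_
    conv_rhs => rw [← (Equiv.addLeft v).tsum_eq]
    simp [zdist_add_left]

lemma discCap_vadd (v : Zd d) (A : Set (Zd d)) : discCap α (v +ᵥ A) = discCap α A := by
  have h := discEnergies_subset_vadd (α := α) (-v) (v +ᵥ A)
  rw [neg_vadd_vadd] at h
  rw [discCap, discCap, (discEnergies_subset_vadd v A).antisymm h]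

end Capacity

section Restriction

variable {α : ℝ} {B : Set (Zd d)} {μ : Zd d → ℝ}

lemma sInf_discEnergies_mul_sq_le_energy (hB : B.Finite) (h0 : ∀ x, 0 ≤ μ x)
    (hμB : ∀ x ∉ B, μ x = 0) (hμ1 : HasSum μ 1) (A : Set (Zd d)) :
    sInf (discEnergies α A) * (∑' x, A.indicator μ x) ^ 2 ≤ energy α μ := by
  obtain ⟨a, hasum⟩ : Summable (A.indicator μ) := hμ1.summable.indicator A
  rw [hasum.tsum_eq]
  have hind0 : ∀ x, 0 ≤ A.indicator μ x := Set.indicator_nonneg fun x _ => h0 x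
  rcases (hasum.nonneg hind0).eq_or_lt with ha | ha
  · rw [← ha, sq, mul_zero, mul_zero]
    exact energy_nonneg h0
  have hν : energy α (fun x => a⁻¹ * A.indicator μ x) ∈ discEnergies α A := by
    refine ⟨_, fun x => mul_nonneg (inv_nonneg.mpr ha.le) (hind0 x),
      fun x hx => by simp [Set.indicator_of_notMem hx], ?_, rfl⟩
    simpa [inv_mul_cancel₀ ha.ne'] using hasum.mul_left a⁻¹
  calc sInf (discEnergies α A) * a ^ 2
      ≤ energy α (fun x => a⁻¹ * A.indicator μ x) * a ^ 2 :=
        mul_le_mul_of_nonneg_right (csInf_le discEnergies_bddBelow hν) (sq_nonneg a)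
    _ = energy α (A.indicator μ) := by
        rw [energy_const_mul]
        field_simp
    _ ≤ energy α μ := energy_indicator_le hB h0 hμB A

lemma exists_inv_card_le_tsum_indicator {ι : Type*} {t : Finset ι} {A : ι → Set (Zd d)}
    (ht : t.Nonempty) (hcov : B ⊆ ⋃ i ∈ t, A i) (h0 : ∀ x, 0 ≤ μ x)
    (hμB : ∀ x ∉ B, μ x = 0) (hμ1 : HasSum μ 1) :
    ∃ i ∈ t, (t.card : ℝ)⁻¹ ≤ ∑' x, (A i).indicator μ x := by
  have hcover : ∀ x, μ x ≤ ∑ i ∈ t, (A i).indicator μ x := by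
    intro x
    by_cases hx : x ∈ B
    · obtain ⟨i, hi, hxi⟩ := Set.mem_iUnion₂.mp (hcov hx)
      rw [← Set.indicator_of_mem hxi μ]
      exact Finset.single_le_sum (fun j _ => Set.indicator_nonneg (fun y _ => h0 y) x) hi
    · rw [hμB x hx]
      exact Finset.sum_nonneg fun j _ => Set.indicator_nonneg (fun y _ => h0 y) x
  refine Finset.exists_le_of_sum_le ht ?_
  calc ∑ _i ∈ t, (t.card : ℝ)⁻¹ = ∑' x, μ x := by
        rw [Finset.sum_const, nsmul_eq_mul, mul_inv_cancel₀ (by simpa using ht.ne_empty),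
          hμ1.tsum_eq]
    _ ≤ ∑' x, ∑ i ∈ t, (A i).indicator μ x :=
        hμ1.summable.tsum_le_tsum hcover
          (summable_sum fun i _ => hμ1.summable.indicator (A i))
    _ = ∑ i ∈ t, ∑' x, (A i).indicator μ x :=
        Summable.tsum_finsetSum fun i _ => hμ1.summable.indicator (A i)

theorem exists_discCap_le_card_sq_mul_discCap {ι : Type*} {t : Finset ι}
    {A : ι → Set (Zd d)} (hα : 0 ≤ α) (hA : ∀ i ∈ t, (A i).Finite)
    (hAne : ∀ i ∈ t, (A i).Nonempty) (hB : B.Nonempty) (hcov : B ⊆ ⋃ i ∈ t, A i) :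
    ∃ i ∈ t, discCap α B ≤ (t.card : ℝ) ^ 2 * discCap α (A i) := by
  have ht : t.Nonempty := by
    obtain ⟨i, hi, -⟩ := Set.mem_iUnion₂.mp (hcov hB.some_mem)
    exact ⟨i, hi⟩
  have hBfin : B.Finite := (t.finite_toSet.biUnion hA).subset hcov
  obtain ⟨i₀, hi₀, hmin⟩ := t.exists_min_image (fun i => sInf (discEnergies α (A i))) ht
  have hcard : (0 : ℝ) < t.card := by exact_mod_cast ht.card_pos
  have hlow : sInf (discEnergies α (A i₀)) / (t.card : ℝ) ^ 2 ≤ sInf (discEnergies α B) := by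
    refine le_csInf ⟨1, one_mem_discEnergies hB.some_mem⟩ ?_
    rintro _ ⟨μ, h0, hμB, hμ1, rfl⟩
    obtain ⟨j, hj, hmass⟩ := exists_inv_card_le_tsum_indicator ht hcov h0 hμB hμ1
    calc sInf (discEnergies α (A i₀)) / (t.card : ℝ) ^ 2
        ≤ sInf (discEnergies α (A j)) * ((t.card : ℝ)⁻¹) ^ 2 := by
          rw [inv_pow, ← div_eq_mul_inv]
          exact div_le_div_of_nonneg_right (hmin j hj) (by positivity)
      _ ≤ sInf (discEnergies α (A j)) * (∑' x, (A j).indicator μ x) ^ 2 :=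
          mul_le_mul_of_nonneg_left (pow_le_pow_left₀ (by positivity) hmass 2)
            sInf_discEnergies_nonneg
      _ ≤ energy α μ := sInf_discEnergies_mul_sq_le_energy hBfin h0 hμB hμ1 (A j)
  refine ⟨i₀, hi₀, ?_⟩
  calc discCap α B ≤ (sInf (discEnergies α (A i₀)) / (t.card : ℝ) ^ 2)⁻¹ :=
        inv_anti₀ (div_pos (sInf_discEnergies_pos (hA i₀ hi₀) (hAne i₀ hi₀) hα)
          (by positivity)) hlow
    _ = (t.card : ℝ) ^ 2 * discCap α (A i₀) := by rw [inv_div, div_eq_mul_inv, discCap]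

end Restriction

section Blocks

-- For `0 < s`, integer division rounds down, so the fibres are the cubes `s • v + [0, s)^d`.
def blockIndex (s : ℤ) (x : Zd d) : Zd d := fun i => x i / s

lemma abs_sub_le_of_ediv_eq {s a b : ℤ} (hs : 0 < s) (h : a / s = b / s) : |a - b| ≤ s - 1 := by
  have ha := Int.mul_ediv_add_emod a s
  have hb := Int.mul_ediv_add_emod b s
  have := Int.emod_nonneg a hs.ne'
  have := Int.emod_nonneg b hs.ne'
  have := Int.emod_lt_of_pos a hs
  have := Int.emod_lt_of_pos b hs
  rw [h] at ha
  rw [abs_le]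
  constructor <;> linarith

lemma zdiam_le_of_blockIndex_eq {s : ℤ} (hs : 0 < s) {A : Set (Zd d)}
    (hA : ∀ x ∈ A, ∀ y ∈ A, blockIndex s x = blockIndex s y) : zdiam A ≤ √d * (s - 1) := by
  have hs1 : (0 : ℝ) ≤ s - 1 := by
    have : (1 : ℝ) ≤ s := by exact_mod_cast hs
    linarith
  refine Real.sSup_le ?_ (mul_nonneg (Real.sqrt_nonneg _) hs1)
  rintro _ ⟨x, hx, y, hy, rfl⟩
  refine zdist_le_sqrt_mul hs1 fun i => ?_
  exact_mod_cast abs_sub_le_of_ediv_eq hs (congrFun (hA x hx y hy) i)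

lemma card_image_blockIndex_le {s N : ℤ} {m : ℕ} (hs : 0 < s) (hN : N < m * s)
    (B : Finset (Zd d)) (hB : ∀ x ∈ B, ∀ i, 2 * |x i| ≤ N) :
    (B.image (blockIndex s)).card ≤ (m + 1) ^ d := by
  set L := N / 2
  have hsub :
      B.image (blockIndex s) ⊆ Fintype.piFinset fun _ => Finset.Icc ((-L) / s) (L / s) := by
    simp only [Finset.subset_iff, Finset.mem_image, Fintype.mem_piFinset, Finset.mem_Icc]
    rintro _ ⟨x, hx, rfl⟩ i
    have := abs_le.mp (show |x i| ≤ L by have := hB x hx i; omega)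
    exact ⟨Int.ediv_le_ediv hs this.1, Int.ediv_le_ediv hs this.2⟩
  have hhi := Int.ediv_mul_le L hs.ne'
  have hlo := Int.lt_ediv_add_one_mul_self (-L) hs
  have hwidth : L / s - (-L) / s < m + 1 := by
    refine lt_of_mul_lt_mul_right ?_ hs.le
    have : 2 * L ≤ N := by omega
    linarith
  calc (B.image (blockIndex s)).card ≤ (Finset.Icc ((-L) / s) (L / s)).card ^ d := by
        simpa using Finset.card_le_card hsub
    _ ≤ (m + 1) ^ d := by
        gcongr
        rw [Int.card_Icc, Int.toNat_le]
        push_cast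
        omega

lemma exists_block_scale (hd : 1 ≤ d) (n : ℕ) :
    ∃ s : ℤ, 0 < s ∧ 8 * √d * ((s : ℝ) - 1) ≤ 2 ^ n ∧ (2 : ℤ) ^ n < (16 * d : ℕ) * s := by
  have hq : 8 * d * (2 ^ n / (8 * d)) ≤ 2 ^ n := Nat.mul_div_le (2 ^ n) (8 * d)
  have hq' : 2 ^ n < 8 * d * (2 ^ n / (8 * d) + 1) :=
    Nat.lt_mul_div_succ (2 ^ n) (by omega : 0 < 8 * d)
  refine ⟨(2 ^ n / (8 * d) + 1 : ℕ), by positivity, ?_, ?_⟩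
  · have hsqrt : √d ≤ d := Real.sqrt_le_self_iff.mpr (Or.inr (by exact_mod_cast hd))
    have hqR : 8 * (d : ℝ) * (2 ^ n / (8 * d) : ℕ) ≤ 2 ^ n := by exact_mod_cast hq
    push_cast
    calc 8 * √d * ((2 ^ n / (8 * d) : ℕ) + 1 - 1 : ℝ) = 8 * √d * (2 ^ n / (8 * d) : ℕ) := by
          ring
      _ ≤ 8 * d * (2 ^ n / (8 * d) : ℕ) := by gcongr
      _ ≤ 2 ^ n := hqR
  · have : 2 ^ n < 16 * d * (2 ^ n / (8 * d) + 1) :=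
      hq'.trans_le (Nat.mul_le_mul_right _ (by omega))
    exact_mod_cast this

lemma exists_block_cover (hd : 1 ≤ d) {n : ℕ} {B : Set (Zd d)} (hB : B.Finite)
    (hBn : B ⊆ annulus d n) :
    ∃ (t : Finset (Zd d)) (A : Zd d → Set (Zd d)), t.card ≤ (16 * d + 1) ^ d ∧
      (∀ v ∈ t, A v ⊆ B) ∧ (∀ v ∈ t, (A v).Nonempty) ∧ B ⊆ (⋃ v ∈ t, A v) ∧
      ∀ v, 8 * zdiam (A v) ≤ 2 ^ n := by
  obtain ⟨s, hs, hdiam, hscale⟩ := exists_block_scale hd n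
  refine ⟨hB.toFinset.image (blockIndex s), fun v => B ∩ blockIndex s ⁻¹' {v}, ?_,
    fun _ _ => Set.inter_subset_left, fun v hv => ?_, fun x hx => ?_, fun v => ?_⟩
  · exact card_image_blockIndex_le hs hscale _ fun x hx =>
      two_mul_abs_le_of_mem_annulus (hBn (by simpa using hx))
  · obtain ⟨x, hx, rfl⟩ := Finset.mem_image.mp hv
    exact ⟨x, by simpa using hx, rfl⟩
  · exact Set.mem_iUnion₂.mpr ⟨_, Finset.mem_image_of_mem _ (by simpa using hx), hx, rfl⟩
  · have := zdiam_le_of_blockIndex_eq (A := B ∩ blockIndex s ⁻¹' {v}) hs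
      fun x hx y hy => hx.2.trans hy.2.symm
    linarith

end Blocks

section PowerBounds

lemma two_pow_rpow_neg (n : ℕ) (β : ℝ) : ((2 : ℝ) ^ n) ^ (-β) = 2 ^ (-(n : ℝ) * β) := by
  rw [← Real.rpow_natCast, ← Real.rpow_mul zero_le_two, neg_mul_comm]

variable {n : ℕ} {b : Zd d} {β : ℝ}

lemma sqrt_rpow_mul_le_znorm_rpow (hb : b ∈ annulus d n) (hβ : 0 ≤ β) :
    √d ^ (-β) * 2 ^ (-(n : ℝ) * β) ≤ znorm b ^ (-β) := by
  rw [← two_pow_rpow_neg, ← Real.mul_rpow (Real.sqrt_nonneg _) (by positivity)]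
  exact Real.rpow_le_rpow_of_nonpos ((by positivity : (0 : ℝ) < 2 ^ n / 4).trans_le
    (two_pow_div_four_le_znorm hb)) (znorm_le_of_mem_annulus hb) (neg_nonpos.mpr hβ)

lemma znorm_rpow_le (hb : b ∈ annulus d n) (hβ : 0 ≤ β) :
    znorm b ^ (-β) ≤ 4 ^ β * 2 ^ (-(n : ℝ) * β) := by
  calc znorm b ^ (-β) ≤ (2 ^ n / 4) ^ (-β) :=
        Real.rpow_le_rpow_of_nonpos (by positivity) (two_pow_div_four_le_znorm hb)
          (neg_nonpos.mpr hβ)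
    _ = 4 ^ β * 2 ^ (-(n : ℝ) * β) := by
        rw [Real.div_rpow (by positivity) (by positivity), two_pow_rpow_neg,
          Real.rpow_neg (by positivity), div_inv_eq_mul, mul_comm]

end PowerBounds

section Hitting

variable {Ω : Type*} [MeasurableSpace Ω] {P : Measure Ω} {R : Ω → Set (Zd d)}
  {α β c C : ℝ} {B : Set (Zd d)}

def HittingComparable (P : Measure Ω) (R : Ω → Set (Zd d)) (α β c C : ℝ) : Prop :=
  ∀ B : Set (Zd d), B.Finite → (0 : Zd d) ∈ B → ∀ x : Zd d, 2 * zdiam B ≤ znorm x →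
    ENNReal.ofReal (c * znorm x ^ (-β) * discCap α B) ≤ P {ω | (R ω ∩ (x +ᵥ B)).Nonempty} ∧
    P {ω | (R ω ∩ (x +ᵥ B)).Nonempty} ≤ ENNReal.ofReal (C * znorm x ^ (-β) * discCap α B)

lemma HittingComparable.bounds_of_mem (h : HittingComparable P R α β c C) {A : Set (Zd d)}
    (hA : A.Finite) {b : Zd d} (hb : b ∈ A) (hdiam : 2 * zdiam A ≤ znorm b) :
    ENNReal.ofReal (c * znorm b ^ (-β) * discCap α A) ≤ P {ω | (R ω ∩ A).Nonempty} ∧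
    P {ω | (R ω ∩ A).Nonempty} ≤ ENNReal.ofReal (C * znorm b ^ (-β) * discCap α A) := by
  have h0 : (0 : Zd d) ∈ -b +ᵥ A := ⟨b, hb, neg_add_cancel b⟩
  have := h (-b +ᵥ A) hA.vadd_set h0 b (by rwa [zdiam_vadd])
  rwa [vadd_neg_vadd, discCap_vadd] at this

lemma HittingComparable.bounds_of_mem_annulus (h : HittingComparable P R α β c C)
    (hβ : 0 ≤ β) (hc : 0 ≤ c) (hC : 0 ≤ C) {n : ℕ} {A : Set (Zd d)} (hA : A.Finite)
    {b : Zd d} (hb : b ∈ A) (hbn : b ∈ annulus d n) (hdiam : 8 * zdiam A ≤ 2 ^ n) :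
    ENNReal.ofReal (c * √d ^ (-β) * 2 ^ (-(n : ℝ) * β) * discCap α A)
        ≤ P {ω | (R ω ∩ A).Nonempty} ∧
      P {ω | (R ω ∩ A).Nonempty}
        ≤ ENNReal.ofReal (C * 4 ^ β * 2 ^ (-(n : ℝ) * β) * discCap α A) := by
  obtain ⟨hlow, hup⟩ := h.bounds_of_mem hA hb <| by
    linarith [two_pow_div_four_le_znorm hbn]
  refine ⟨le_trans (ENNReal.ofReal_le_ofReal ?_) hlow, hup.trans (ENNReal.ofReal_le_ofReal ?_)⟩
  · rw [mul_assoc c]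
    exact mul_le_mul_of_nonneg_right
      (mul_le_mul_of_nonneg_left (sqrt_rpow_mul_le_znorm_rpow hbn hβ) hc) discCap_nonneg
  · rw [mul_assoc C (4 ^ β)]
    exact mul_le_mul_of_nonneg_right
      (mul_le_mul_of_nonneg_left (znorm_rpow_le hbn hβ) hC) discCap_nonneg

variable {ι : Type*} {t : Finset ι} {A : ι → Set (Zd d)} {K : ℕ}

lemma le_measure_hit_of_cover (hα : 0 ≤ α) (hB : B.Finite) (hBne : B.Nonempty)
    (hsub : ∀ i ∈ t, A i ⊆ B) (hne : ∀ i ∈ t, (A i).Nonempty) (hcov : B ⊆ ⋃ i ∈ t, A i)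
    (hK : t.card ≤ K) {ℓ : ℝ} (hℓ : 0 ≤ ℓ)
    (hlow : ∀ i ∈ t, ENNReal.ofReal (ℓ * discCap α (A i)) ≤ P {ω | (R ω ∩ A i).Nonempty}) :
    ENNReal.ofReal (ℓ / K ^ 2 * discCap α B) ≤ P {ω | (R ω ∩ B).Nonempty} := by
  obtain ⟨i, hi, hcap⟩ := exists_discCap_le_card_sq_mul_discCap hα
    (fun i hi => hB.subset (hsub i hi)) hne hBne hcov
  have hK0 : (0 : ℝ) < K := by exact_mod_cast (Finset.card_pos.mpr ⟨i, hi⟩).trans_le hK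
  have hcapK : discCap α B ≤ (K : ℝ) ^ 2 * discCap α (A i) :=
    hcap.trans (mul_le_mul_of_nonneg_right (by gcongr) discCap_nonneg)
  calc ENNReal.ofReal (ℓ / K ^ 2 * discCap α B) ≤ ENNReal.ofReal (ℓ * discCap α (A i)) := by
        refine ENNReal.ofReal_le_ofReal ?_
        calc ℓ / K ^ 2 * discCap α B ≤ ℓ / K ^ 2 * ((K : ℝ) ^ 2 * discCap α (A i)) := by
              gcongr
          _ = ℓ * discCap α (A i) := by field_simp
    _ ≤ P {ω | (R ω ∩ A i).Nonempty} := hlow i hi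
    _ ≤ P {ω | (R ω ∩ B).Nonempty} :=
        measure_mono fun ω ⟨x, hxR, hxA⟩ => ⟨x, hxR, hsub i hi hxA⟩

lemma measure_hit_le_of_cover (hα : 0 ≤ α) (hB : B.Finite) (hsub : ∀ i ∈ t, A i ⊆ B)
    (hne : ∀ i ∈ t, (A i).Nonempty) (hcov : B ⊆ ⋃ i ∈ t, A i) (hK : t.card ≤ K) {u : ℝ}
    (hu : 0 ≤ u)
    (hup : ∀ i ∈ t, P {ω | (R ω ∩ A i).Nonempty} ≤ ENNReal.ofReal (u * discCap α (A i))) :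
    P {ω | (R ω ∩ B).Nonempty} ≤ ENNReal.ofReal (K * u * discCap α B) := by
  calc P {ω | (R ω ∩ B).Nonempty} ≤ P (⋃ i ∈ t, {ω | (R ω ∩ A i).Nonempty}) := by
        refine measure_mono fun ω ⟨x, hxR, hxB⟩ => ?_
        obtain ⟨i, hi, hxA⟩ := Set.mem_iUnion₂.mp (hcov hxB)
        exact Set.mem_iUnion₂.mpr ⟨i, hi, x, hxR, hxA⟩
    _ ≤ ∑ i ∈ t, P {ω | (R ω ∩ A i).Nonempty} := measure_biUnion_finset_le _ _
    _ ≤ ∑ _i ∈ t, ENNReal.ofReal (u * discCap α B) := Finset.sum_le_sum fun i hi =>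
        (hup i hi).trans <| ENNReal.ofReal_le_ofReal <|
          mul_le_mul_of_nonneg_left (discCap_mono hB (hne i hi) hα (hsub i hi)) hu
    _ ≤ K * ENNReal.ofReal (u * discCap α B) := by
        rw [Finset.sum_const, nsmul_eq_mul]
        gcongr
    _ = ENNReal.ofReal (K * u * discCap α B) := by
        rw [mul_assoc, ENNReal.ofReal_mul (Nat.cast_nonneg K), ENNReal.ofReal_natCast]

end Hitting

end HittingCapacity

open HittingCapacity

/-- If the hitting probabilities of distant translates by a random set `R`
are comparable to `|x|^(-β) Cap_α`, then for every nonempty finite `B ⊆ Ψ_n` one has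
`P(R ∩ B ≠ ∅) ≍ 2^(-nβ) Cap_α(B)`. -/
theorem statement19 (d : ℕ) (hd : 1 ≤ d) (α β : ℝ)
    (hα : α ∈ Set.Ioo (0:ℝ) d) (hβ : β ∈ Set.Ioo (0:ℝ) d)
    (c C : ℝ) (hc : 0 < c) (hcC : c ≤ C) :
    ∃ c' C' : ℝ, 0 < c' ∧ c' ≤ C' ∧
      ∀ (Ω : Type) (mΩ : MeasurableSpace Ω) (P : Measure Ω),
        IsProbabilityMeasure P →
      ∀ R : Ω → Set (Zd d),
        (@Measurable Ω (Set (Zd d)) _ (setSigma d) R) →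
        (∀ (B : Set (Zd d)), B.Finite → (0 : Zd d) ∈ B →
          ∀ x : Zd d, 2 * zdiam B ≤ znorm x →
            ENNReal.ofReal (c * znorm x ^ (-β) * discCap α B) ≤
              P {ω | (R ω ∩ (x +ᵥ B)).Nonempty} ∧
            P {ω | (R ω ∩ (x +ᵥ B)).Nonempty} ≤
              ENNReal.ofReal (C * znorm x ^ (-β) * discCap α B)) →
      ∀ (n : ℕ), 1 ≤ n →
      ∀ B : Set (Zd d), B.Nonempty → B.Finite → B ⊆ annulus d n →
        ENNReal.ofReal (c' * (2:ℝ) ^ (-(n : ℝ) * β) * discCap α B) ≤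
          P {ω | (R ω ∩ B).Nonempty} ∧
        P {ω | (R ω ∩ B).Nonempty} ≤
          ENNReal.ofReal (C' * (2:ℝ) ^ (-(n : ℝ) * β) * discCap α B) := by
  have hC : 0 ≤ C := hc.le.trans hcC
  set K : ℕ := (16 * d + 1) ^ d
  have hK1 : (1 : ℝ) ≤ K := by exact_mod_cast Nat.one_le_pow _ _ (by omega)
  have hsqrt : √d ^ (-β) ≤ 1 := Real.rpow_le_one_of_one_le_of_nonpos
    (Real.one_le_sqrt.mpr (by exact_mod_cast hd)) (by linarith [hβ.1])
  refine ⟨c * √d ^ (-β) / K ^ 2, K * C * 4 ^ β, by positivity, ?_, ?_⟩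
  · calc c * √d ^ (-β) / K ^ 2 ≤ c * 1 / 1 := by gcongr; exact one_le_pow₀ hK1
      _ ≤ 1 * C * 1 := by linarith
      _ ≤ K * C * 4 ^ β := by gcongr; exact Real.one_le_rpow (by norm_num) hβ.1.le
  intro Ω _ P _ R _ hhit n _ B hBne hBfin hBsub
  obtain ⟨t, A, hK, hsub, hne, hcov, hdiam⟩ := exists_block_cover hd hBfin hBsub
  have hpiece : ∀ v ∈ t,
      ENNReal.ofReal (c * √d ^ (-β) * 2 ^ (-(n : ℝ) * β) * discCap α (A v))
          ≤ P {ω | (R ω ∩ A v).Nonempty} ∧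
        P {ω | (R ω ∩ A v).Nonempty}
          ≤ ENNReal.ofReal (C * 4 ^ β * 2 ^ (-(n : ℝ) * β) * discCap α (A v)) := fun v hv =>
    have ⟨b, hb⟩ := hne v hv
    HittingComparable.bounds_of_mem_annulus hhit hβ.1.le hc.le hC (hBfin.subset (hsub v hv)) hb
      (hBsub (hsub v hv hb)) (hdiam v)
  constructor
  · convert le_measure_hit_of_cover hα.1.le hBfin hBne hsub hne hcov hK (by positivity)
      fun v hv => (hpiece v hv).1 using 2
    ring
  · convert measure_hit_le_of_cover hα.1.le hBfin hsub hne hcov hK (by positivity)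
      fun v hv => (hpiece v hv).2 using 2
    ring
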